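/- Let s(r) = sin(πr)/(πr) for r ≠ 0 with s(0) = 1, and define ε_s(r) = ∫₀^r s(u) du − (1/2)·sgn(r). For every real k with k ≠ 0 and |k| ≠ 1/2, the improper integral lim_{R→∞} ∫_{−R}^{R} ε_s(r)·e^{2πikr} dr exists and equals 0 when 0 < |k| < 1/2, and equals 1/(2πik) when |k| > 1/2. -/

import Mathlib

open MeasureTheory Real Filter

/-- The sine kernel `s(r) = sin(π r)/(π r)`, with `s(0) = 1`. -/
noncomputable def sKer (r : ℝ) : ℝ :=
  if r = 0 then 1 else Real.sin (Real.pi * r) / (Real.pi * r)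

/-- `ε_s(r) = ∫₀^r s(u) du − (1/2) sgn r`. -/
noncomputable def epsS (r : ℝ) : ℝ :=
  (∫ u in (0:ℝ)..r, sKer u) - (1/2) * Real.sign r

/-!
Since `ε_s` is odd, `∫_{-R}^R ε_s(r) e^{2πikr} dr = 2i ∫_0^R ε_s(r) sin(2πkr) dr`, and on `(0, R]`
we have `ε_s(r) = ∫_0^r s - 1/2`. Integrating by parts leaves a boundary term tending to
`-1/(4πk)` plus `(2πk)⁻¹ ∫_0^R s(r) cos(2πkr) dr`. By `sin a cos b = (sin (a+b) + sin (a-b))/2`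
the latter is a combination of Dirichlet integrals `∫_0^∞ sin(ax)/x dx = (π/2) sgn a`, whose signs
cancel exactly when `|k| > 1/2`. The Dirichlet integral itself is computed, with an `O(1/R)`
error, by writing `1/x = ∫_0^∞ e^{-tx} dt` and exchanging the order of integration.
-/

open Set Topology

lemma integral_zero_neg_of_even {E : Type*} [NormedAddCommGroup E] [NormedSpace ℝ E]
    {f : ℝ → E} (hf : ∀ x, f (-x) = f x) (T : ℝ) :
    ∫ x in (0:ℝ)..-T, f x = -∫ x in (0:ℝ)..T, f x := by
  have h := intervalIntegral.integral_comp_neg (a := 0) (b := T) f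
  simp only [hf, neg_zero] at h
  rw [intervalIntegral.integral_symm, h]

lemma integral_neg_to_self_eq_integral_add_comp_neg {E : Type*} [NormedAddCommGroup E]
    [NormedSpace ℝ E] {g : ℝ → E} {R : ℝ} (hg : IntervalIntegrable g volume (-R) R) :
    ∫ x in (-R)..R, g x = ∫ x in (0:ℝ)..R, (g x + g (-x)) := by
  have hzero : (0:ℝ) ∈ uIcc (-R) R := by
    rcases le_total 0 R with hR | hR <;> simp [hR]
  have hleft : IntervalIntegrable g volume (-R) 0 := hg.mono_set (uIcc_subset_uIcc_left hzero)
  have hright : IntervalIntegrable g volume 0 R := hg.mono_set (uIcc_subset_uIcc_right hzero)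
  have hleft_neg : IntervalIntegrable (fun x => g (-x)) volume 0 R := by
    simpa using ((IntervalIntegrable.iff_comp_neg (f := g)).1 hleft).symm
  rw [← intervalIntegral.integral_add_adjacent_intervals hleft hright,
    intervalIntegral.integral_add hright hleft_neg, add_comm, intervalIntegral.integral_comp_neg,
    neg_zero]

lemma integral_ofReal_mul_exp_mul_I_of_odd {f : ℝ → ℝ} (hf : ∀ x, f (-x) = -f x) {R : ℝ}
    (hint : IntervalIntegrable f volume (-R) R) (c : ℝ) :
    ∫ x in (-R)..R, (f x : ℂ) * Complex.exp (↑(c * x) * Complex.I)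
      = 2 * Complex.I * ↑(∫ x in (0:ℝ)..R, f x * sin (c * x)) := by
  have hint' : IntervalIntegrable (fun x => (f x : ℂ) * Complex.exp (↑(c * x) * Complex.I))
      volume (-R) R :=
    IntervalIntegrable.mul_continuousOn ⟨hint.1.ofReal, hint.2.ofReal⟩ (by fun_prop)
  rw [integral_neg_to_self_eq_integral_add_comp_neg hint', ← intervalIntegral.integral_ofReal,
    ← intervalIntegral.integral_const_mul]
  congr 1 with x
  simp only [hf, mul_neg, Complex.ofReal_neg, Complex.exp_mul_I, Complex.cos_neg,
    Complex.sin_neg]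
  push_cast
  ring

lemma Real.monotone_sign : Monotone Real.sign := by
  intro a b hab
  simp only [Real.sign]
  split_ifs <;> linarith

lemma sign_add_add_sign_sub_of_abs_lt {a c : ℝ} (h : |c| < a) :
    Real.sign (a + c) + Real.sign (a - c) = 2 := by
  obtain ⟨h₁, h₂⟩ := abs_lt.1 h
  rw [sign_of_pos (by linarith), sign_of_pos (by linarith)]
  norm_num

lemma sign_add_add_sign_sub_of_lt_abs {a c : ℝ} (ha : 0 ≤ a) (h : a < |c|) :
    Real.sign (a + c) + Real.sign (a - c) = 0 := by
  rcases lt_abs.1 h with h | h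
  · rw [sign_of_pos (by linarith), sign_of_neg (by linarith)]
    norm_num
  · rw [sign_of_neg (by linarith), sign_of_pos (by linarith)]
    norm_num

lemma integral_exp_neg_mul_mul_sin (t R : ℝ) :
    ∫ x in (0:ℝ)..R, exp (-(t * x)) * sin x
      = (1 - exp (-(t * R)) * (cos R + t * sin R)) / (1 + t ^ 2) := by
  have hderiv : ∀ x : ℝ, HasDerivAt
      (fun y => -(exp (-(t * y)) * (t * sin y + cos y)) / (1 + t ^ 2))
      (exp (-(t * x)) * sin x) x := by
    intro x
    have hexp : HasDerivAt (fun y : ℝ => exp (-(t * y))) (-t * exp (-(t * x))) x := by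
      simpa [mul_comm] using ((hasDerivAt_id x).const_mul t).neg.exp
    have hpoly : HasDerivAt (fun y => t * sin y + cos y) (t * cos x - sin x) x :=
      (((hasDerivAt_sin x).const_mul t).add (hasDerivAt_cos x)).congr_deriv (by ring)
    refine ((hexp.mul hpoly).neg.div_const (1 + t ^ 2)).congr_deriv ?_
    field_simp
    ring
  rw [intervalIntegral.integral_eq_sub_of_hasDerivAt (fun x _ => hderiv x)
    ((by fun_prop : Continuous fun x => exp (-(t * x)) * sin x).intervalIntegrable _ _)]
  simp only [mul_zero, neg_zero, exp_zero, sin_zero, cos_zero]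
  ring

lemma abs_exp_neg_mul_mul_div_le (R : ℝ) {t : ℝ} (ht : 0 ≤ t) :
    |exp (-(t * R)) * (cos R + t * sin R) / (1 + t ^ 2)| ≤ 2 * exp (-(t * R)) := by
  have hpos : 0 < 1 + t ^ 2 := by positivity
  have hbound : |cos R + t * sin R| ≤ 1 + t := by
    calc |cos R + t * sin R| ≤ |cos R| + t * |sin R| := by
          simpa [abs_mul, abs_of_nonneg ht] using abs_add_le (cos R) (t * sin R)
      _ ≤ 1 + t * 1 := by gcongr; exacts [abs_cos_le_one R, abs_sin_le_one R]
      _ = 1 + t := by ring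
  rw [abs_div, abs_mul, abs_of_pos (exp_pos _), abs_of_pos hpos, div_le_iff₀ hpos]
  calc exp (-(t * R)) * |cos R + t * sin R| ≤ exp (-(t * R)) * (1 + t) := by gcongr
    _ ≤ 2 * exp (-(t * R)) * (1 + t ^ 2) := by
        nlinarith [exp_pos (-(t * R)), sq_nonneg (t - 1 / 2)]

lemma integrableOn_exp_neg_mul_Ioi {x : ℝ} (hx : 0 < x) :
    IntegrableOn (fun t => exp (-(t * x))) (Ioi 0) := by
  simpa [mul_comm] using exp_neg_integrableOn_Ioi 0 hx

lemma integral_exp_neg_mul_Ioi {x : ℝ} (hx : 0 < x) :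
    ∫ t in Ioi (0:ℝ), exp (-(t * x)) = x⁻¹ := by
  simpa [mul_comm, neg_div, ← div_neg] using integral_exp_mul_Ioi (neg_lt_zero.2 hx) 0

lemma integral_exp_neg_mul_mul_Ioi {x : ℝ} (hx : 0 < x) (c : ℝ) :
    ∫ t in Ioi (0:ℝ), exp (-(t * x)) * c = c / x := by
  rw [MeasureTheory.integral_mul_const, integral_exp_neg_mul_Ioi hx, inv_mul_eq_div]

lemma integrable_exp_neg_mul_mul_sin_prod (R : ℝ) :
    Integrable (Function.uncurry fun x t => exp (-(t * x)) * sin x)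
      ((volume.restrict (Ioc 0 R)).prod (volume.restrict (Ioi 0))) := by
  have hcont : Continuous (Function.uncurry fun x t : ℝ => exp (-(t * x)) * sin x) := by
    fun_prop
  refine (integrable_prod_iff hcont.aestronglyMeasurable).2 ⟨?_, ?_⟩
  · filter_upwards [ae_restrict_mem measurableSet_Ioc] with x hx
    simpa only [Function.uncurry_apply_pair] using
      (integrableOn_exp_neg_mul_Ioi hx.1).mul_const _
  · have hnorm : ∀ᵐ x ∂(volume.restrict (Ioc 0 R)),
        |sin x| / x
          = ∫ t in Ioi 0, ‖Function.uncurry (fun x t => exp (-(t * x)) * sin x) (x, t)‖ := by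
      filter_upwards [ae_restrict_mem measurableSet_Ioc] with x hx
      simp only [Function.uncurry_apply_pair, norm_mul, norm_of_nonneg (exp_pos _).le,
        norm_eq_abs]
      exact (integral_exp_neg_mul_mul_Ioi hx.1 _).symm
    refine Integrable.congr ?_ hnorm
    refine Integrable.mono' (integrableOn_const (C := (1:ℝ)) measure_Ioc_lt_top.ne)
      (measurable_sin.abs.div measurable_id).aestronglyMeasurable ?_
    filter_upwards [ae_restrict_mem measurableSet_Ioc] with x hx
    rw [norm_div, norm_eq_abs, norm_eq_abs, abs_abs, abs_of_pos hx.1, div_le_one hx.1]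
    simpa [abs_of_pos hx.1] using abs_sin_le_abs (x := x)

lemma integral_sin_div_eq_integral_Ioi {R : ℝ} (hR : 0 ≤ R) :
    ∫ x in (0:ℝ)..R, sin x / x
      = ∫ t in Ioi (0:ℝ), (1 - exp (-(t * R)) * (cos R + t * sin R)) / (1 + t ^ 2) := by
  rw [intervalIntegral.integral_of_le hR]
  calc ∫ x in Ioc 0 R, sin x / x
      = ∫ x in Ioc 0 R, ∫ t in Ioi 0, exp (-(t * x)) * sin x :=
        setIntegral_congr_fun measurableSet_Ioc fun x hx =>
          (integral_exp_neg_mul_mul_Ioi hx.1 _).symm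
    _ = ∫ t in Ioi 0, ∫ x in Ioc 0 R, exp (-(t * x)) * sin x :=
        integral_integral_swap (integrable_exp_neg_mul_mul_sin_prod R)
    _ = _ := setIntegral_congr_fun measurableSet_Ioi fun t _ => by
        rw [← intervalIntegral.integral_of_le hR, integral_exp_neg_mul_mul_sin]

lemma abs_integral_sin_div_sub_pi_div_two_le {R : ℝ} (hR : 0 < R) :
    |(∫ x in (0:ℝ)..R, sin x / x) - π / 2| ≤ 2 / R := by
  set err := fun t => exp (-(t * R)) * (cos R + t * sin R) / (1 + t ^ 2)
  have herr_le : ∀ᵐ t ∂(volume.restrict (Ioi 0)), ‖err t‖ ≤ 2 * exp (-(t * R)) := by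
    filter_upwards [ae_restrict_mem measurableSet_Ioi] with t ht
    exact abs_exp_neg_mul_mul_div_le R (le_of_lt ht)
  have hdom : IntegrableOn (fun t => 2 * exp (-(t * R))) (Ioi 0) :=
    (integrableOn_exp_neg_mul_Ioi hR).const_mul 2
  have herr_int : IntegrableOn err (Ioi 0) :=
    hdom.mono' ((by fun_prop : Continuous fun t => exp (-(t * R)) * (cos R + t * sin R)).div
      (by fun_prop) fun t => by positivity).aestronglyMeasurable herr_le
  have hsplit : ∫ t in Ioi (0:ℝ), (1 - exp (-(t * R)) * (cos R + t * sin R)) / (1 + t ^ 2)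
      = π / 2 - ∫ t in Ioi 0, err t := by
    have harctan : ∫ t in Ioi (0:ℝ), (1 + t ^ 2)⁻¹ = π / 2 := by
      simp [integral_Ioi_inv_one_add_sq]
    rw [← harctan, ← integral_sub integrable_inv_one_add_sq.integrableOn herr_int]
    congr 1 with t
    simp only [err, sub_div, one_div]
  rw [integral_sin_div_eq_integral_Ioi hR.le, hsplit, sub_sub_cancel_left, abs_neg,
    ← norm_eq_abs]
  calc ‖∫ t in Ioi 0, err t‖ ≤ ∫ t in Ioi 0, 2 * exp (-(t * R)) :=
        norm_integral_le_of_norm_le hdom herr_le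
    _ = 2 / R := by
        rw [MeasureTheory.integral_const_mul, integral_exp_neg_mul_Ioi hR, div_eq_mul_inv]

lemma tendsto_integral_sin_div_atTop :
    Tendsto (fun R => ∫ x in (0:ℝ)..R, sin x / x) atTop (𝓝 (π / 2)) := by
  rw [← tendsto_sub_nhds_zero_iff]
  refine squeeze_zero_norm' (a := fun R => 2 / R) ?_ (tendsto_const_nhds.div_atTop tendsto_id)
  filter_upwards [eventually_gt_atTop 0] with R hR
  exact abs_integral_sin_div_sub_pi_div_two_le hR

lemma tendsto_integral_sinc_atTop :
    Tendsto (fun R => ∫ x in (0:ℝ)..R, sinc x) atTop (𝓝 (π / 2)) := by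
  refine tendsto_integral_sin_div_atTop.congr fun R => intervalIntegral.integral_congr_ae ?_
  filter_upwards [compl_mem_ae_iff.mpr (measure_singleton (0:ℝ))] with x hx _
  exact (sinc_of_ne_zero hx).symm

lemma tendsto_integral_sinc_atBot :
    Tendsto (fun T => ∫ x in (0:ℝ)..T, sinc x) atBot (𝓝 (-(π / 2))) := by
  simpa only [Function.comp_def, integral_zero_neg_of_even sinc_neg, neg_neg] using
    (tendsto_integral_sinc_atTop.comp tendsto_neg_atBot_atTop).neg

lemma tendsto_integral_mul_sinc_mul (a : ℝ) :
    Tendsto (fun R => ∫ x in (0:ℝ)..R, a * sinc (a * x)) atTop (𝓝 (Real.sign a * (π / 2))) := by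
  simp_rw [intervalIntegral.integral_const_mul, intervalIntegral.mul_integral_comp_mul_left,
    mul_zero]
  rcases lt_trichotomy a 0 with ha | rfl | ha
  · simpa [Function.comp_def, sign_of_neg ha] using
      tendsto_integral_sinc_atBot.comp (tendsto_id.const_mul_atTop_of_neg ha)
  · simp
  · simpa [Function.comp_def, sign_of_pos ha] using
      tendsto_integral_sinc_atTop.comp (tendsto_id.const_mul_atTop ha)

lemma mul_sinc_mul_of_ne_zero (a : ℝ) {x : ℝ} (hx : x ≠ 0) :
    a * sinc (a * x) = sin (a * x) / x := by
  rcases eq_or_ne a 0 with rfl | ha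
  · simp
  · rw [sinc_of_ne_zero (mul_ne_zero ha hx)]
    field_simp

lemma mul_sinc_mul_mul_cos (a b x : ℝ) :
    a * sinc (a * x) * cos (b * x)
      = ((a + b) * sinc ((a + b) * x) + (a - b) * sinc ((a - b) * x)) / 2 := by
  rcases eq_or_ne x 0 with rfl | hx
  · simp only [mul_zero, sinc_zero, cos_zero]
    ring
  · rw [mul_sinc_mul_of_ne_zero a hx, mul_sinc_mul_of_ne_zero _ hx, mul_sinc_mul_of_ne_zero _ hx,
      add_mul, sub_mul, sin_add, sin_sub]
    ring

lemma tendsto_integral_mul_sinc_mul_mul_cos (a b : ℝ) :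
    Tendsto (fun R => ∫ x in (0:ℝ)..R, a * sinc (a * x) * cos (b * x)) atTop
      (𝓝 ((Real.sign (a + b) + Real.sign (a - b)) * (π / 4))) := by
  have hint (c R : ℝ) : IntervalIntegrable (fun x => c * sinc (c * x)) volume 0 R :=
    (continuous_const.mul (continuous_sinc.comp (continuous_const_mul c))).intervalIntegrable 0 R
  convert ((tendsto_integral_mul_sinc_mul (a + b)).add
    (tendsto_integral_mul_sinc_mul (a - b))).div_const 2 using 1
  · ext R
    simp_rw [mul_sinc_mul_mul_cos]
    rw [intervalIntegral.integral_div, intervalIntegral.integral_add (hint _ _) (hint _ _)]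
  · congr 1
    ring

lemma sKer_eq_sinc : sKer = fun r => sinc (π * r) := by
  ext r
  rcases eq_or_ne r 0 with rfl | hr
  · simp [sKer]
  · rw [sKer, if_neg hr, sinc_of_ne_zero (mul_ne_zero pi_ne_zero hr)]

lemma continuous_sKer : Continuous sKer :=
  sKer_eq_sinc ▸ continuous_sinc.comp (continuous_const_mul π)

lemma tendsto_integral_sKer_mul_cos (c : ℝ) :
    Tendsto (fun R => ∫ r in (0:ℝ)..R, sKer r * cos (c * r)) atTop
      (𝓝 ((Real.sign (π + c) + Real.sign (π - c)) / 4)) := by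
  convert (tendsto_integral_mul_sinc_mul_mul_cos π c).div_const π using 1
  · ext R
    rw [← intervalIntegral.integral_div, sKer_eq_sinc]
    congr 1 with r
    field_simp
  · congr 1
    field_simp

lemma tendsto_integral_sKer : Tendsto (fun R => ∫ r in (0:ℝ)..R, sKer r) atTop (𝓝 (1 / 2)) := by
  have h := tendsto_integral_sKer_mul_cos 0
  norm_num [sign_of_pos pi_pos] at h
  exact h

lemma epsS_neg (r : ℝ) : epsS (-r) = -epsS r := by
  have hsKer_neg (u : ℝ) : sKer (-u) = sKer u := by simp only [sKer_eq_sinc, mul_neg, sinc_neg]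
  rw [epsS, epsS, integral_zero_neg_of_even hsKer_neg, Real.sign_neg]
  ring

lemma hasDerivAt_integral_sKer (r : ℝ) :
    HasDerivAt (fun x => ∫ u in (0:ℝ)..x, sKer u) (sKer r) r :=
  intervalIntegral.integral_hasDerivAt_right (continuous_sKer.intervalIntegrable 0 r)
    (continuous_sKer.stronglyMeasurableAtFilter _ _) continuous_sKer.continuousAt

lemma intervalIntegrable_epsS (a b : ℝ) : IntervalIntegrable epsS volume a b :=
  ((continuous_iff_continuousAt.2 fun r => (hasDerivAt_integral_sKer r).continuousAt
    ).intervalIntegrable a b).sub (Real.monotone_sign.intervalIntegrable.const_mul _)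

lemma integral_epsS_mul_sin {c : ℝ} (hc : c ≠ 0) {R : ℝ} (hR : 0 ≤ R) :
    ∫ r in (0:ℝ)..R, epsS r * sin (c * r)
      = -((∫ u in (0:ℝ)..R, sKer u) - 1 / 2) * cos (c * R) / c - 1 / (2 * c)
        + (∫ r in (0:ℝ)..R, sKer r * cos (c * r)) / c := by
  have hsign : ∫ r in (0:ℝ)..R, epsS r * sin (c * r)
      = ∫ r in (0:ℝ)..R, ((∫ u in (0:ℝ)..r, sKer u) - 1 / 2) * sin (c * r) := by
    refine intervalIntegral.integral_congr_ae (ae_of_all _ fun r hr => ?_)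
    rw [uIoc_of_le hR] at hr
    rw [epsS, sign_of_pos hr.1, mul_one]
  have hcos (x : ℝ) : HasDerivAt (fun r => -cos (c * r) / c) (sin (c * x)) x := by
    refine (((hasDerivAt_id' x).const_mul c).cos.neg.div_const c).congr_deriv ?_
    field_simp
  rw [hsign, intervalIntegral.integral_mul_deriv_eq_deriv_mul
    (fun x _ => (hasDerivAt_integral_sKer x).sub_const (1 / 2)) (fun x _ => hcos x)
    (continuous_sKer.intervalIntegrable _ _)
    ((continuous_sin.comp (continuous_const_mul c)).intervalIntegrable _ _)]
  simp only [intervalIntegral.integral_same, mul_zero, cos_zero, mul_div_assoc',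
    intervalIntegral.integral_div, mul_neg, intervalIntegral.integral_neg]
  field_simp
  ring

lemma tendsto_integral_epsS_mul_sin {c : ℝ} (hc : c ≠ 0) :
    Tendsto (fun R => ∫ r in (0:ℝ)..R, epsS r * sin (c * r)) atTop
      (𝓝 (((Real.sign (π + c) + Real.sign (π - c)) / 4 - 1 / 2) / c)) := by
  have hboundary : Tendsto (fun R => -((∫ u in (0:ℝ)..R, sKer u) - 1 / 2) * cos (c * R) / c)
      atTop (𝓝 0) := by
    refine squeeze_zero_norm (a := fun R => |(∫ u in (0:ℝ)..R, sKer u) - 1 / 2| / |c|)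
      (fun R => ?_) ?_
    · rw [norm_div, norm_mul, norm_neg, norm_eq_abs, norm_eq_abs, norm_eq_abs]
      gcongr
      exact mul_le_of_le_one_right (abs_nonneg _) (abs_cos_le_one _)
    · simpa using ((tendsto_sub_nhds_zero_iff.2 tendsto_integral_sKer).abs).div_const |c|
  have hlim := (hboundary.sub_const (1 / (2 * c))).add
    ((tendsto_integral_sKer_mul_cos c).div_const c)
  convert hlim.congr' ((eventually_ge_atTop 0).mono fun R hR =>
    (integral_epsS_mul_sin hc hR).symm) using 2
  ring

/-- Fourier transform of `ε_s`: for `k ≠ 0` with `|k| ≠ 1/2`, the symmetric improper integral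
`lim_{R→∞} ∫_{-R}^{R} ε_s(r) e^{2πikr} dr` exists and equals `0` when `0 < |k| < 1/2` and
`1/(2πik)` when `|k| > 1/2`. -/
theorem epsS_fourier (k : ℝ) (hk0 : k ≠ 0) (hk : |k| ≠ 1/2) :
    Tendsto (fun R : ℝ =>
        ∫ r in (-R)..R, ((epsS r : ℝ) : ℂ) * Complex.exp (2 * Real.pi * Complex.I * k * r))
      atTop
      (nhds (if |k| < 1/2 then 0 else 1 / (2 * Real.pi * Complex.I * k))) := by
  have hc : 2 * π * k ≠ 0 := mul_ne_zero (by positivity) hk0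
  have hexp (r : ℝ) : 2 * (π : ℂ) * Complex.I * k * r = ↑(2 * π * k * r) * Complex.I := by
    push_cast
    ring
  simp_rw [hexp, integral_ofReal_mul_exp_mul_I_of_odd epsS_neg (intervalIntegrable_epsS _ _)]
  suffices hval : (if |k| < 1 / 2 then 0 else 1 / (2 * (π : ℂ) * Complex.I * k))
      = 2 * Complex.I * ↑(((Real.sign (π + 2 * π * k) + Real.sign (π - 2 * π * k)) / 4 - 1 / 2)
        / (2 * π * k)) by
    rw [hval]
    exact ((Complex.continuous_ofReal.tendsto _).comp
      (tendsto_integral_epsS_mul_sin hc)).const_mul (2 * Complex.I)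
  have habs : |2 * π * k| = π * (2 * |k|) := by
    rw [abs_mul, abs_of_pos (by positivity : (0:ℝ) < 2 * π)]
    ring
  rcases lt_or_gt_of_ne hk with hlt | hgt
  · rw [if_pos hlt, sign_add_add_sign_sub_of_abs_lt (by rw [habs]; nlinarith [pi_pos])]
    norm_num
  · rw [if_neg hgt.not_gt,
      sign_add_add_sign_sub_of_lt_abs pi_pos.le (by rw [habs]; nlinarith [pi_pos])]
    push_cast
    field_simp
    rw [Complex.I_sq]
    ring
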